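/- arXiv:2112.05895 — 2 statements merged into one kernel-verified Lean document; each statement's English description precedes it below -/
import Mathlib

section
/- For x ∈ (0,1/2) with x ≠ 1/3, define F̃(x) = −6x² + 4x − 2/3 + (2/ξ(x))·(2x log x + (1−2x) log(1−2x) + log 3). Then F̃(x) > 0 for x ∈ (1/6, 1/3), F̃(x) < 0 for x ∈ (0, 1/6) ∪ (1/3, 1/2), and F̃(1/6) = 0. -/
/-!
With u = 3x one has F̃(x) = (2 / (3 ξ(x))) · gap(u), where
gap(u) = (u + 1) log u + (2 − u) log (3 − 2u), and ξ > 0 on (0, 1/2); so F̃(x) has the sign of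
gap(3x). Now gap(1/2) = gap(1) = 0 and gap''(u) = 3 (u − 1)(3 − 4u) / (u² (3 − 2u)²). Hence gap is
concave on (0, 3/4], while gap' increases on [3/4, 1] up to gap'(1) = 0 and decreases afterwards,
so gap is strictly decreasing on [3/4, 3/2). Together with gap(1/2) = 0 < gap(3/4), concavity
makes gap negative on (0, 1/2) and positive on (1/2, 3/4], and monotonicity makes it positive on
[3/4, 1) and negative on (1, 3/2).
-/

open Real Set

/-- ξ(x) = (1/(1−3x)) log((1−2x)/x), continuously extended by ξ(1/3) = 3. -/
noncomputable def xi (x : ℝ) : ℝ :=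
  if x = 1 / 3 then 3 else (1 / (1 - 3 * x)) * Real.log ((1 - 2 * x) / x)

/-- F̃(x) = −6x² + 4x − 2/3 + (2/ξ(x))(2x log x + (1−2x) log(1−2x) + log 3). -/
noncomputable def Ftilde (x : ℝ) : ℝ :=
  -6 * x ^ 2 + 4 * x - 2 / 3 +
    (2 / xi x) * (2 * x * Real.log x + (1 - 2 * x) * Real.log (1 - 2 * x) + Real.log 3)

theorem ConcaveOn.pos_of_mem_openSegment {E : Type*} [AddCommGroup E] [Module ℝ E] {s : Set E}
    {f : E → ℝ} (hf : ConcaveOn ℝ s f) {x y z : E} (hx : x ∈ s) (hy : y ∈ s)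
    (hz : z ∈ openSegment ℝ x y) (hfx : 0 ≤ f x) (hfy : 0 < f y) : 0 < f z := by
  obtain ⟨a, b, ha, hb, hab, rfl⟩ := hz
  calc 0 < a • f x + b • f y := by simp only [smul_eq_mul]; positivity
    _ ≤ f (a • x + b • y) := hf.2 hx hy ha.le hb.le hab

noncomputable def gap (u : ℝ) : ℝ := (u + 1) * log u + (2 - u) * log (3 - 2 * u)

noncomputable def gapDeriv (u : ℝ) : ℝ :=
  log u - log (3 - 2 * u) + (u + 1) / u - 2 * (2 - u) / (3 - 2 * u)

noncomputable def gapDeriv2 (u : ℝ) : ℝ :=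
  3 * (u - 1) * (3 - 4 * u) / (u ^ 2 * (3 - 2 * u) ^ 2)

lemma hasDerivAt_three_sub_two_mul (u : ℝ) : HasDerivAt (fun y : ℝ => 3 - 2 * y) (-2) u := by
  simpa using ((hasDerivAt_id u).const_mul 2).const_sub 3

lemma hasDerivAt_gap {u : ℝ} (hu : u ∈ Ioo (0 : ℝ) (3 / 2)) : HasDerivAt gap (gapDeriv u) u := by
  have hv : 3 - 2 * u ≠ 0 := by linarith [hu.2]
  have hlog := (hasDerivAt_log hv).comp u (hasDerivAt_three_sub_two_mul u)
  refine ((((hasDerivAt_id u).add_const 1).mul (hasDerivAt_log hu.1.ne')).add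
    (((hasDerivAt_id u).const_sub 2).mul hlog)).congr_deriv ?_
  simp only [gapDeriv, id, Function.comp_apply]
  field_simp
  ring

lemma hasDerivAt_gapDeriv {u : ℝ} (hu : u ∈ Ioo (0 : ℝ) (3 / 2)) :
    HasDerivAt gapDeriv (gapDeriv2 u) u := by
  have hu0 : u ≠ 0 := hu.1.ne'
  have hv : 3 - 2 * u ≠ 0 := by linarith [hu.2]
  have hlog := (hasDerivAt_log hv).comp u (hasDerivAt_three_sub_two_mul u)
  refine ((((hasDerivAt_log hu0).sub hlog).add
    (((hasDerivAt_id u).add_const 1).div (hasDerivAt_id u) hu0)).sub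
    ((((hasDerivAt_id u).const_sub 2).const_mul 2).div (hasDerivAt_three_sub_two_mul u)
      hv)).congr_deriv ?_
  simp only [gapDeriv2, id]
  -- `field_simp` would rewrite `3 - 2 * u` to `3 - u * 2` and lose track of `hv`
  generalize hw : 3 - 2 * u = w at hv ⊢
  field_simp
  rw [← hw]
  ring

lemma continuousOn_gap : ContinuousOn gap (Ioo 0 (3 / 2)) :=
  fun _ hu => (hasDerivAt_gap hu).continuousAt.continuousWithinAt

lemma continuousOn_gapDeriv : ContinuousOn gapDeriv (Ioo 0 (3 / 2)) :=
  fun _ hu => (hasDerivAt_gapDeriv hu).continuousAt.continuousWithinAt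

lemma gap_half : gap (1 / 2) = 0 := by
  rw [gap, show (3 : ℝ) - 2 * (1 / 2) = 2 by norm_num, one_div, log_inv]
  ring

lemma gap_one : gap 1 = 0 := by norm_num [gap]

lemma gapDeriv_one : gapDeriv 1 = 0 := by norm_num [gapDeriv]

lemma gapDeriv2_pos {u : ℝ} (hu : u ∈ Ioo (3 / 4 : ℝ) 1) : 0 < gapDeriv2 u := by
  have hu0 : 0 < u := by linarith [hu.1]
  have hv : 0 < 3 - 2 * u := by linarith [hu.2]
  exact div_pos (by nlinarith [hu.1, hu.2]) (by positivity)

lemma gapDeriv2_neg {u : ℝ} (hu : u ∈ Ioo (1 : ℝ) (3 / 2)) : gapDeriv2 u < 0 := by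
  have hu0 : 0 < u := by linarith [hu.1]
  have hv : 0 < 3 - 2 * u := by linarith [hu.2]
  exact div_neg_of_neg_of_pos (by nlinarith [hu.1, hu.2]) (by positivity)

lemma gapDeriv2_nonpos {u : ℝ} (hu : u ∈ Ioc (0 : ℝ) (3 / 4)) : gapDeriv2 u ≤ 0 :=
  div_nonpos_of_nonpos_of_nonneg (by nlinarith [hu.1, hu.2]) (by positivity)

lemma strictMonoOn_gapDeriv : StrictMonoOn gapDeriv (Icc (3 / 4) 1) := by
  refine strictMonoOn_of_hasDerivWithinAt_pos (f' := gapDeriv2) (convex_Icc _ _)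
    (continuousOn_gapDeriv.mono fun u hu => ⟨by linarith [hu.1], by linarith [hu.2]⟩)
    (fun u hu => ?_) (fun u hu => ?_) <;> rw [interior_Icc] at hu
  · exact (hasDerivAt_gapDeriv ⟨by linarith [hu.1], by linarith [hu.2]⟩).hasDerivWithinAt
  · exact gapDeriv2_pos hu

lemma strictAntiOn_gapDeriv : StrictAntiOn gapDeriv (Ico 1 (3 / 2)) := by
  refine strictAntiOn_of_hasDerivWithinAt_neg (f' := gapDeriv2) (convex_Ico _ _)
    (continuousOn_gapDeriv.mono fun u hu => ⟨by linarith [hu.1], hu.2⟩)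
    (fun u hu => ?_) (fun u hu => ?_) <;> rw [interior_Ico] at hu
  · exact (hasDerivAt_gapDeriv ⟨by linarith [hu.1], hu.2⟩).hasDerivWithinAt
  · exact gapDeriv2_neg hu

lemma gapDeriv_neg {u : ℝ} (hu : u ∈ Ico (3 / 4 : ℝ) (3 / 2)) (hu1 : u ≠ 1) : gapDeriv u < 0 := by
  rw [← gapDeriv_one]
  rcases hu1.lt_or_gt with hlt | hgt
  · exact strictMonoOn_gapDeriv ⟨hu.1, hlt.le⟩ ⟨by norm_num, le_rfl⟩ hlt
  · exact strictAntiOn_gapDeriv ⟨le_rfl, by norm_num⟩ ⟨hgt.le, hu.2⟩ hgt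

lemma strictAntiOn_gap : StrictAntiOn gap (Ico (3 / 4) (3 / 2)) := by
  rw [← Icc_union_Ico_eq_Ico (by norm_num : (3 / 4 : ℝ) ≤ 1) (by norm_num)]
  refine StrictAntiOn.union ?_ ?_ (isGreatest_Icc (by norm_num)) (isLeast_Ico (by norm_num))
  · refine strictAntiOn_of_hasDerivWithinAt_neg (f' := gapDeriv) (convex_Icc _ _)
      (continuousOn_gap.mono fun u hu => ⟨by linarith [hu.1], by linarith [hu.2]⟩)
      (fun u hu => ?_) (fun u hu => ?_) <;> rw [interior_Icc] at hu
    · exact (hasDerivAt_gap ⟨by linarith [hu.1], by linarith [hu.2]⟩).hasDerivWithinAt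
    · exact gapDeriv_neg ⟨hu.1.le, by linarith [hu.2]⟩ hu.2.ne
  · refine strictAntiOn_of_hasDerivWithinAt_neg (f' := gapDeriv) (convex_Ico _ _)
      (continuousOn_gap.mono fun u hu => ⟨by linarith [hu.1], hu.2⟩)
      (fun u hu => ?_) (fun u hu => ?_) <;> rw [interior_Ico] at hu
    · exact (hasDerivAt_gap ⟨by linarith [hu.1], hu.2⟩).hasDerivWithinAt
    · exact gapDeriv_neg ⟨by linarith [hu.1], hu.2⟩ hu.1.ne'

lemma concaveOn_gap : ConcaveOn ℝ (Ioc 0 (3 / 4)) gap := by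
  refine concaveOn_of_hasDerivWithinAt2_nonpos (f' := gapDeriv) (f'' := gapDeriv2) (convex_Ioc _ _)
    (continuousOn_gap.mono fun u hu => ⟨hu.1, by linarith [hu.2]⟩)
    (fun u hu => ?_) (fun u hu => ?_) (fun u hu => ?_) <;> rw [interior_Ioc] at hu
  · exact (hasDerivAt_gap ⟨hu.1, by linarith [hu.2]⟩).hasDerivWithinAt
  · exact (hasDerivAt_gapDeriv ⟨hu.1, by linarith [hu.2]⟩).hasDerivWithinAt
  · exact gapDeriv2_nonpos ⟨hu.1, hu.2.le⟩

lemma gap_three_quarters_pos : 0 < gap (3 / 4) := by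
  simpa [gap_one] using
    strictAntiOn_gap ⟨le_rfl, by norm_num⟩ ⟨by norm_num, by norm_num⟩
      (by norm_num : (3 / 4 : ℝ) < 1)

lemma gap_neg_of_mem_Ioo_zero_half {u : ℝ} (hu : u ∈ Ioo (0 : ℝ) (1 / 2)) : gap u < 0 := by
  have := concaveOn_gap.left_lt_of_lt_right (z := 1 / 2) ⟨hu.1, by linarith [hu.2]⟩
    ⟨by norm_num, le_rfl⟩
    (by rw [openSegment_eq_Ioo (by linarith [hu.2])]; exact ⟨hu.2, by norm_num⟩)
    (gap_half ▸ gap_three_quarters_pos)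
  rwa [gap_half] at this

lemma gap_pos_of_mem_Ioo_half_one {u : ℝ} (hu : u ∈ Ioo (1 / 2 : ℝ) 1) : 0 < gap u := by
  rcases lt_or_ge u (3 / 4) with hlt | hge
  · exact concaveOn_gap.pos_of_mem_openSegment ⟨by norm_num, by norm_num⟩ ⟨by norm_num, le_rfl⟩
      (by rw [openSegment_eq_Ioo (by norm_num)]; exact ⟨hu.1, hlt⟩)
      gap_half.ge gap_three_quarters_pos
  · simpa [gap_one] using strictAntiOn_gap ⟨hge, by linarith [hu.2]⟩ ⟨by norm_num, by norm_num⟩ hu.2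

lemma gap_neg_of_mem_Ioo_one {u : ℝ} (hu : u ∈ Ioo (1 : ℝ) (3 / 2)) : gap u < 0 := by
  simpa [gap_one] using strictAntiOn_gap ⟨by norm_num, by norm_num⟩ ⟨by linarith [hu.1], hu.2⟩ hu.1

lemma xi_pos {x : ℝ} (hx : x ∈ Ioo (0 : ℝ) (1 / 2)) : 0 < xi x := by
  rw [xi]
  split_ifs with h13
  · norm_num
  have hx2 : 0 < 1 - 2 * x := by linarith [hx.2]
  rw [one_div_mul_eq_div]
  rcases lt_or_gt_of_ne h13 with hlt | hgt
  · exact div_pos (log_pos ((one_lt_div hx.1).2 (by linarith))) (by linarith)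
  · exact div_pos_of_neg_of_neg (log_neg (div_pos hx2 hx.1) ((div_lt_one hx.1).2 (by linarith)))
      (by linarith)

lemma Ftilde_eq_mul_gap {x : ℝ} (hx : x ∈ Ioo (0 : ℝ) (1 / 2)) :
    Ftilde x = 2 / (3 * xi x) * gap (3 * x) := by
  by_cases h13 : x = 1 / 3
  · subst h13
    have hlog : log (1 / 3) = -log 3 := by rw [one_div, log_inv]
    norm_num [Ftilde, xi, gap_one, hlog]
    ring
  have hx2 : 0 < 1 - 2 * x := by linarith [hx.2]
  have h3x : 1 - 3 * x ≠ 0 := fun h => h13 (by linarith)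
  set L := log (1 - 2 * x) - log x with hL
  have hxi : xi x = L / (1 - 3 * x) := by
    rw [xi, if_neg h13, log_div hx2.ne' hx.1.ne', one_div_mul_eq_div]
  have hL0 : L ≠ 0 := fun h => (xi_pos hx).ne' (by rw [hxi, h, zero_div])
  have hlog : log (1 - 2 * x) = L + log x := by rw [hL]; ring
  have hgap : gap (3 * x) = 3 * log 3 + (3 * x + 1) * log x + (2 - 3 * x) * log (1 - 2 * x) := by
    rw [gap, show 3 - 2 * (3 * x) = 3 * (1 - 2 * x) by ring, log_mul three_ne_zero hx.1.ne',
      log_mul three_ne_zero hx2.ne']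
    ring
  rw [Ftilde, hxi, hgap, hlog]
  field_simp
  ring

/-- F̃ > 0 on (1/6, 1/3), F̃ < 0 on (0, 1/6) ∪ (1/3, 1/2), and
F̃(1/6) = 0. -/
theorem stmt_9 :
    (∀ x ∈ Ioo (1 / 6 : ℝ) (1 / 3), 0 < Ftilde x) ∧
    (∀ x ∈ Ioo (0 : ℝ) (1 / 6) ∪ Ioo (1 / 3 : ℝ) (1 / 2), Ftilde x < 0) ∧
    Ftilde (1 / 6) = 0 := by
  have coeff_pos {x : ℝ} (hx : x ∈ Ioo (0 : ℝ) (1 / 2)) : 0 < 2 / (3 * xi x) := by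
    have := xi_pos hx
    positivity
  refine ⟨fun x hx => ?_, ?_, ?_⟩
  · have hx' : x ∈ Ioo (0 : ℝ) (1 / 2) := ⟨by linarith [hx.1], by linarith [hx.2]⟩
    rw [Ftilde_eq_mul_gap hx']
    exact mul_pos (coeff_pos hx')
      (gap_pos_of_mem_Ioo_half_one ⟨by linarith [hx.1], by linarith [hx.2]⟩)
  · rintro x (hx | hx)
    · have hx' : x ∈ Ioo (0 : ℝ) (1 / 2) := ⟨hx.1, by linarith [hx.2]⟩
      rw [Ftilde_eq_mul_gap hx']
      exact mul_neg_of_pos_of_neg (coeff_pos hx')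
        (gap_neg_of_mem_Ioo_zero_half ⟨by linarith [hx.1], by linarith [hx.2]⟩)
    · have hx' : x ∈ Ioo (0 : ℝ) (1 / 2) := ⟨by linarith [hx.1], hx.2⟩
      rw [Ftilde_eq_mul_gap hx']
      exact mul_neg_of_pos_of_neg (coeff_pos hx')
        (gap_neg_of_mem_Ioo_one ⟨by linarith [hx.1], by linarith [hx.2]⟩)
  · rw [Ftilde_eq_mul_gap ⟨by norm_num, by norm_num⟩, show (3 : ℝ) * (1 / 6) = 1 / 2 by norm_num,
      gap_half, mul_zero]
end

section
/- Let β > 3, J ∈ (0,1), and let x_l ∈ (1/3, 1/2) satisfy ξ(x_l) = β. Suppose P, Q ∈ (0,1) with P < Q satisfy P − (1/β) log P = Q − (1/β) log Q and Q = (1+J)/(β(1−J)). Then J > (β − 1/x_l)/(β + 1/x_l) if and only if P + 2Q > 1; and J = (β − 1/x_l)/(β + 1/x_l) if and only if P + 2Q = 1. -/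
/-!
`potential β x = x - (log x) / β` decreases on `(0, 1/β]` and increases on `[1/β, ∞)`, so
`P < 1/β < Q`, and for `1/3 < Q < 1/2` comparing `P` with `1 - 2Q` amounts to comparing
`potential β (1 - 2Q)` with `potential β Q = potential β P`. Their difference is
`(3Q - 1)(ξ(Q) - β)/β`, and `ξ` is strictly increasing on `(1/3, 1/2)` with `ξ(x_l) = β`, so
`P + 2Q - 1` has the sign of `Q - x_l`. Finally `J ↦ (1 + J)/(β(1 - J))` is increasing and sends
`ψ₁` to `x_l`, so `Q - x_l` has the sign of `J - ψ₁`.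
-/

open Real Set

noncomputable def potential (β x : ℝ) : ℝ := x - (1 / β) * Real.log x

lemma hasDerivAt_potential (β : ℝ) {x : ℝ} (hx : x ≠ 0) :
    HasDerivAt (potential β) (1 - 1 / (β * x)) x := by
  have := (hasDerivAt_id x).sub ((hasDerivAt_log hx).const_mul (1 / β))
  exact this.congr_deriv (by rw [one_div, one_div, mul_inv])

lemma continuousOn_potential (β : ℝ) : ContinuousOn (potential β) (Ioi 0) :=
  fun _ hx => (hasDerivAt_potential β (ne_of_gt hx)).continuousAt.continuousWithinAt

lemma strictAntiOn_potential {β : ℝ} (hβ : 0 < β) :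
    StrictAntiOn (potential β) (Ioc 0 (1 / β)) := by
  refine strictAntiOn_of_deriv_neg (convex_Ioc _ _)
    ((continuousOn_potential β).mono Ioc_subset_Ioi_self) fun x hx => ?_
  rw [interior_Ioc] at hx
  rw [(hasDerivAt_potential β hx.1.ne').deriv, sub_neg, one_lt_div (by nlinarith [hx.1]),
    ← lt_div_iff₀' hβ]
  exact hx.2

lemma strictMonoOn_potential {β : ℝ} (hβ : 0 < β) :
    StrictMonoOn (potential β) (Ici (1 / β)) := by
  have hpos : Ici (1 / β) ⊆ Ioi 0 := fun x hx => (one_div_pos.2 hβ).trans_le hx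
  refine strictMonoOn_of_deriv_pos (convex_Ici _) ((continuousOn_potential β).mono hpos)
    fun x hx => ?_
  rw [interior_Ici] at hx
  have hx0 : 0 < x := (one_div_pos.2 hβ).trans hx
  rw [(hasDerivAt_potential β hx0.ne').deriv, sub_pos, div_lt_one (by positivity),
    ← div_lt_iff₀' hβ]
  exact hx

lemma cmp_eq_cmp_apply_of_apply_eq {α γ : Type*} [LinearOrder α] [LinearOrder γ] {f : α → γ}
    {a c p q r : α} (hanti : StrictAntiOn f (Ioc a c)) (hmono : StrictMonoOn f (Ici c))
    (hp : p ∈ Ioc a c) (hr : a < r) (hrq : r < q) (hpq : f p = f q) :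
    cmp p r = cmp (f r) (f q) := by
  rcases le_or_gt r c with hrc | hcr
  · rw [← hpq, hanti.cmp_map_eq ⟨hr, hrc⟩ hp]
  · rw [(cmp_eq_lt_iff _ _).2 (hp.2.trans_lt hcr),
      (cmp_eq_lt_iff _ _).2 (hmono (le_of_lt hcr) (hcr.trans hrq).le hrq)]

lemma potential_one_sub_two_mul_sub_potential {β x : ℝ} (hβ : β ≠ 0) (hx : 0 < x)
    (hx' : x < 1 / 2) :
    potential β (1 - 2 * x) - potential β x = (3 * x - 1) * (xi x - β) / β := by
  rcases eq_or_ne x (1 / 3) with rfl | h3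
  · norm_num [potential]
  have h3' : 1 - 3 * x ≠ 0 := fun h => h3 (by linarith)
  rw [xi, if_neg h3, potential, potential, log_div (by linarith) hx.ne']
  have hfactor : (3 * x - 1) * (1 / (1 - 3 * x)) = -1 := by
    rw [← neg_sub, neg_mul, mul_one_div_cancel h3']
  have hinv : 1 / β * β = 1 := one_div_mul_cancel hβ
  rw [eq_div_iff hβ]
  linear_combination -(log (1 - 2 * x) - log x) * (hfactor + hinv)

lemma three_mul_log_lt {s : ℝ} (hs : 1 < s) : 3 * log s < 2 * s - 1 - 1 / s := by
  set u : ℝ := s ^ ((1 : ℝ) / 3) with hu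
  have hs0 : 0 < s := by linarith
  have hu1 : 1 < u := one_lt_rpow hs (by norm_num)
  have hcube : u ^ 3 = s := by
    rw [hu, ← rpow_natCast, ← rpow_mul hs0.le]
    norm_num
  have hlogu : log u < u - 1 := log_lt_sub_one_of_pos (by linarith) hu1.ne'
  -- `log s = 3 log u < 3 (u - 1)`, and `9 (u - 1) ≤ 2u³ - 1 - u⁻³`
  have hpoly : 2 * u ^ 3 - 1 - 1 / u ^ 3 - 9 * (u - 1)
      = (u - 1) ^ 3 * (2 * u ^ 3 + 6 * u ^ 2 + 3 * u + 1) / u ^ 3 := by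
    field_simp
    ring
  have hnonneg : 0 ≤ (u - 1) ^ 3 * (2 * u ^ 3 + 6 * u ^ 2 + 3 * u + 1) / u ^ 3 := by
    have : 0 ≤ u - 1 := by linarith
    positivity
  rw [← hcube, log_pow]
  push_cast
  linarith

lemma xi_eq_div {x : ℝ} (hx : 0 < x) (hx' : x < 1 / 2) (h3 : x ≠ 1 / 3) :
    xi x = (log x - log (1 - 2 * x)) / (3 * x - 1) := by
  have h3' : 3 * x - 1 ≠ 0 := fun h => h3 (by linarith)
  rw [xi, if_neg h3, log_div (by linarith) hx.ne', ← neg_sub (3 * x),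
    one_div_neg_eq_neg_one_div]
  field_simp
  ring

lemma hasDerivAt_log_sub_log_div {x : ℝ} (hx : 0 < x) (hx' : x < 1 / 2) (h3 : x ≠ 1 / 3) :
    HasDerivAt (fun y => (log y - log (1 - 2 * y)) / (3 * y - 1))
      (((x⁻¹ + 2 * (1 - 2 * x)⁻¹) * (3 * x - 1) - (log x - log (1 - 2 * x)) * 3)
        / (3 * x - 1) ^ 2) x := by
  have hlin : ∀ a b : ℝ, HasDerivAt (fun y => a * y + b) a x := fun a b => by
    simpa using ((hasDerivAt_id x).const_mul a).add_const b
  have hM : HasDerivAt (fun y => 1 - 2 * y) (-2) x := by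
    simpa [sub_eq_add_neg, add_comm] using hlin (-2) 1
  have hN := (hasDerivAt_log hx.ne').sub
    ((hasDerivAt_log (by linarith : 0 < 1 - 2 * x).ne').comp x hM)
  have hD : HasDerivAt (fun y => 3 * y - 1) 3 x := by
    simpa [sub_eq_add_neg] using hlin 3 (-1)
  refine (hN.div hD fun h => h3 (by linarith)).congr_deriv ?_
  simp only [Pi.sub_apply, Function.comp_apply]
  ring

lemma strictMonoOn_xi : StrictMonoOn xi (Ioo (1 / 3) (1 / 2)) := by
  have hderiv : ∀ x ∈ Ioo (1 / 3 : ℝ) (1 / 2), HasDerivAt _ _ x := fun x hx =>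
    hasDerivAt_log_sub_log_div (by linarith [hx.1]) hx.2 (ne_of_gt hx.1)
  refine StrictMonoOn.congr ?_ fun x hx =>
    (xi_eq_div (by linarith [hx.1]) hx.2 (ne_of_gt hx.1)).symm
  refine strictMonoOn_of_deriv_pos (convex_Ioo _ _)
    (fun x hx => (hderiv x hx).continuousAt.continuousWithinAt) fun x hx => ?_
  rw [interior_Ioo] at hx
  obtain ⟨h1, h2⟩ := hx
  have hx0 : 0 < x := by linarith
  have h2x : 0 < 1 - 2 * x := by linarith
  rw [(hderiv x ⟨h1, h2⟩).deriv]
  refine div_pos ?_ (pow_pos (by linarith) 2)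
  -- with `s = x / (1 - 2x)` the numerator is `2s - 1 - 1/s - 3 log s`
  have hs : 1 < x / (1 - 2 * x) := by rw [lt_div_iff₀ h2x]; linarith
  have hlog := three_mul_log_lt hs
  rw [log_div hx0.ne' h2x.ne'] at hlog
  have hN : (x⁻¹ + 2 * (1 - 2 * x)⁻¹) * (3 * x - 1)
      = 2 * (x / (1 - 2 * x)) - 1 - 1 / (x / (1 - 2 * x)) := by
    have : 1 - x * 2 ≠ 0 := by linarith
    field_simp
    ring
  linarith

lemma cmp_threshold_eq_cmp {β J x : ℝ} (hβ : 0 < β) (hx : 0 < x) (hJ : J < 1) :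
    cmp ((β - 1 / x) / (β + 1 / x)) J = cmp x ((1 + J) / (β * (1 - J))) := by
  have hk : 0 < (1 + β * x) / (β * (1 - J)) := by
    have : 0 < 1 - J := by linarith
    positivity
  have hsub : (1 + J) / (β * (1 - J)) - x
      = (1 + β * x) / (β * (1 - J)) * (J - (β - 1 / x) / (β + 1 / x)) := by
    have : 1 - J ≠ 0 := by linarith
    have : β * x + 1 ≠ 0 := by positivity
    field_simp
    ring
  rw [cmp_eq_cmp_symm, ← cmp_sub_zero, ← cmp_sub_zero ((1 + J) / _), hsub,
    ← cmp_mul_pos_left hk _ 0, mul_zero]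

lemma cmp_add_two_mul_one_eq_cmp {β x P Q : ℝ} (hβ : 3 < β) (hx : x ∈ Ioo (1 / 3) (1 / 2))
    (hξ : xi x = β) (hP : P ∈ Ioc 0 (1 / β)) (hPQ : potential β P = potential β Q) :
    cmp (P + 2 * Q) 1 = cmp Q x := by
  obtain ⟨hx3, hx2⟩ := hx
  have hβ0 : 0 < β := by linarith
  have hβ3 : 1 / β < 1 / 3 := one_div_lt_one_div_of_lt (by norm_num) hβ
  rcases le_or_gt Q (1 / 3) with hQ3 | hQ3
  · rw [(cmp_eq_lt_iff _ _).2 (by linarith [hP.2]), (cmp_eq_lt_iff _ _).2 (by linarith)]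
  rcases le_or_gt (1 / 2) Q with hQ2 | hQ2
  · rw [(cmp_eq_gt_iff _ _).2 (by linarith [hP.1]), (cmp_eq_gt_iff _ _).2 (by linarith)]
  have hc : 0 < (3 * Q - 1) / β := div_pos (by linarith) hβ0
  calc cmp (P + 2 * Q) 1 = cmp P (1 - 2 * Q) := by
        rw [← cmp_sub_zero, ← cmp_sub_zero P]; ring_nf
    _ = cmp (potential β (1 - 2 * Q)) (potential β Q) :=
        cmp_eq_cmp_apply_of_apply_eq (strictAntiOn_potential hβ0) (strictMonoOn_potential hβ0)
          hP (by linarith) (by linarith) hPQ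
    _ = cmp (xi Q) β := by
        rw [← cmp_sub_zero, potential_one_sub_two_mul_sub_potential hβ0.ne' (by linarith) hQ2,
          mul_div_right_comm, ← cmp_sub_zero (xi Q), ← cmp_mul_pos_left hc (xi Q - β) 0,
          mul_zero]
    _ = cmp Q x := by
        rw [← hξ]
        exact strictMonoOn_xi.cmp_map_eq ⟨hQ3, hQ2⟩ ⟨hx3, hx2⟩

theorem stmt_14_general (β J : ℝ) (hβ : 3 < β) (hJ : J ∈ Ioo (0 : ℝ) 1)
    (xl : ℝ) (hxl : xl ∈ Ioo (1 / 3 : ℝ) (1 / 2)) (hξ : xi xl = β)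
    (P Q : ℝ) (hP : P ∈ Ioo (0 : ℝ) 1) (hPQ : P < Q)
    (heq : P - (1 / β) * Real.log P = Q - (1 / β) * Real.log Q)
    (hQval : Q = (1 + J) / (β * (1 - J))) :
    ((β - 1 / xl) / (β + 1 / xl) < J ↔ 1 < P + 2 * Q) ∧
    (J = (β - 1 / xl) / (β + 1 / xl) ↔ P + 2 * Q = 1) := by
  have hβ0 : 0 < β := by linarith
  have hPβ : P ≤ 1 / β := not_lt.1 fun h =>
    (strictMonoOn_potential hβ0 h.le (h.le.trans hPQ.le) hPQ).ne heq
  have hcmp : cmp ((β - 1 / xl) / (β + 1 / xl)) J = cmp 1 (P + 2 * Q) := by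
    rw [cmp_threshold_eq_cmp hβ0 (by linarith [hxl.1]) hJ.2, ← hQval, cmp_eq_cmp_symm,
      cmp_add_two_mul_one_eq_cmp hβ hxl hξ ⟨hP.1, hPβ⟩ heq]
  exact ⟨lt_iff_lt_of_cmp_eq_cmp hcmp,
    eq_comm.trans ((eq_iff_eq_of_cmp_eq_cmp hcmp).trans eq_comm)⟩

/-- for β > 3, J ∈ (0,1), x_l ∈ (1/3,1/2) with ξ(x_l) = β, and
P < Q in (0,1) with P − (1/β) log P = Q − (1/β) log Q and Q = (1+J)/(β(1−J)):
J > (β − 1/x_l)/(β + 1/x_l) iff P + 2Q > 1, and J = (β − 1/x_l)/(β + 1/x_l) iff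
P + 2Q = 1. -/
theorem stmt_14 (β J : ℝ) (hβ : 3 < β) (hJ : J ∈ Ioo (0 : ℝ) 1)
    (xl : ℝ) (hxl : xl ∈ Ioo (1 / 3 : ℝ) (1 / 2)) (hξ : xi xl = β)
    (P Q : ℝ) (hP : P ∈ Ioo (0 : ℝ) 1) (hQ : Q ∈ Ioo (0 : ℝ) 1) (hPQ : P < Q)
    (heq : P - (1 / β) * Real.log P = Q - (1 / β) * Real.log Q)
    (hQval : Q = (1 + J) / (β * (1 - J))) :
    ((β - 1 / xl) / (β + 1 / xl) < J ↔ 1 < P + 2 * Q) ∧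
    (J = (β - 1 / xl) / (β + 1 / xl) ↔ P + 2 * Q = 1) :=
  stmt_14_general β J hβ hJ xl hxl hξ P Q hP hPQ heq hQval
end
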